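/- Let C = Diag(d) be a diagonal positive-definite matrix with d₁ ≥ d₂ ≥ ⋯ ≥ dₙ > 0 and let 0 < s < n. Then with γ̂ := 1/d_s², the 0/1 vector x̂ with x̂ᵢ = 1 for 1 ≤ i ≤ s and x̂ᵢ = 0 for s+1 ≤ i ≤ n is an optimal solution of the scaled linx problem with γ = γ̂, and consequently γ̂ is an optimal scaling parameter: linx(C,s;γ̂) ≤ linx(C,s;γ) for every γ > 0. -/

import Mathlib

/-!
For diagonal `C = Diag(d)` the matrix in the determinant is diagonal, so the objective splits into
`∑ᵢ log (γ dᵢ² xᵢ + 1 - xᵢ)`, each term affine in `xᵢ` inside the logarithm. At `γ̂ = 1/d_s²`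
monotonicity gives `γ̂ dᵢ² ≥ 1` for `i ≤ s` and `≤ 1` for `i > s`, so every term is maximized
on `[0, 1]` by `x̂ᵢ`, even without the constraint `∑ xᵢ = s`. At the 0/1 vector `x̂` the `s`
factors `γ` cancel against `- s log γ`, so `f(γ; x̂)` does not depend on `γ`, whence
`linx(γ̂) = f(γ̂; x̂) = f(γ; x̂) ≤ linx(γ)`.
-/

open Matrix Real Set

noncomputable section

/-- The feasible polytope `P(n,s)`. -/
def PP (n s : ℕ) : Set (Fin n → ℝ) :=
  {x | (∑ i, x i) = (s : ℝ) ∧ ∀ i, 0 ≤ x i ∧ x i ≤ 1}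

/-- The scaled linx objective `f(C,s;γ;x)`. -/
def fLinxScaled {n : ℕ} (C : Matrix (Fin n) (Fin n) ℝ) (s : ℕ) (γ : ℝ) (x : Fin n → ℝ) : ℝ :=
  (1 / 2) * (Real.log ((γ • (C * Matrix.diagonal x * C) + Matrix.diagonal fun i => 1 - x i).det)
    - (s : ℝ) * Real.log γ)

/-- The scaled linx bound `linx(C,s;γ)`. -/
def linxScaled (n s : ℕ) (C : Matrix (Fin n) (Fin n) ℝ) (γ : ℝ) : ℝ :=
  sSup (fLinxScaled C s γ '' PP n s)

lemma smul_diagonal_mul_add_diagonal {n : ℕ} (d x : Fin n → ℝ) (γ : ℝ) :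
    γ • (diagonal d * diagonal x * diagonal d) + diagonal (fun i => 1 - x i)
      = diagonal fun i => γ * d i ^ 2 * x i + (1 - x i) := by
  ext i j
  rcases eq_or_ne i j with rfl | hij
  · simp only [Matrix.add_apply, Matrix.smul_apply, diagonal_mul_diagonal, diagonal_apply_eq,
      smul_eq_mul]
    ring
  · simp [hij]

lemma fLinxScaled_diagonal {n : ℕ} (d : Fin n → ℝ) (s : ℕ) (γ : ℝ) (x : Fin n → ℝ)
    (hx : ∀ i, γ * d i ^ 2 * x i + (1 - x i) ≠ 0) :
    fLinxScaled (diagonal d) s γ x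
      = 1 / 2 * (∑ i, Real.log (γ * d i ^ 2 * x i + (1 - x i)) - s * Real.log γ) := by
  rw [fLinxScaled, smul_diagonal_mul_add_diagonal, det_diagonal, Real.log_prod fun i _ => hx i]

lemma linx_diagonal_factor_pos {n : ℕ} {d : Fin n → ℝ} {γ : ℝ} (hγ : 0 < γ) (hd : ∀ i, d i ≠ 0)
    {x : Fin n → ℝ} (hx : ∀ i, 0 ≤ x i ∧ x i ≤ 1) (i : Fin n) :
    0 < γ * d i ^ 2 * x i + (1 - x i) := by
  have hdi := hd i
  have ha : 0 < γ * d i ^ 2 := by positivity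
  rcases (hx i).2.lt_or_eq with hlt | heq
  · nlinarith [mul_nonneg ha.le (hx i).1]
  · simpa [heq] using ha

lemma indicator_mem_PP {n : ℕ} (S : Finset (Fin n)) :
    (fun i => if i ∈ S then (1 : ℝ) else 0) ∈ PP n S.card :=
  ⟨by simp, fun i => by dsimp only; split_ifs <;> norm_num⟩

lemma fLinxScaled_diagonal_le_indicator {n : ℕ} {d : Fin n → ℝ} {γ : ℝ} (hγ : 0 < γ)
    (hd : ∀ i, d i ≠ 0) (s : ℕ) (S : Finset (Fin n))
    (hS : ∀ i ∈ S, 1 ≤ γ * d i ^ 2) (hSc : ∀ i ∉ S, γ * d i ^ 2 ≤ 1)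
    {x : Fin n → ℝ} (hx : ∀ i, 0 ≤ x i ∧ x i ≤ 1) :
    fLinxScaled (diagonal d) s γ x
      ≤ fLinxScaled (diagonal d) s γ fun i => if i ∈ S then 1 else 0 := by
  have hpos := linx_diagonal_factor_pos hγ hd hx
  rw [fLinxScaled_diagonal d s γ x fun i => (hpos i).ne',
    fLinxScaled_diagonal d s γ _ fun i =>
      (linx_diagonal_factor_pos hγ hd (indicator_mem_PP S).2 i).ne']
  refine mul_le_mul_of_nonneg_left (sub_le_sub_right (Finset.sum_le_sum fun i _ =>
    Real.log_le_log (hpos i) ?_) _) (by norm_num)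
  split_ifs with hi
  · rw [mul_one, sub_self, add_zero]
    nlinarith [mul_nonneg (sub_nonneg.2 (hS i hi)) (sub_nonneg.2 (hx i).2)]
  · rw [mul_zero, sub_zero, zero_add]
    nlinarith [mul_nonneg (sub_nonneg.2 (hSc i hi)) (hx i).1]

lemma fLinxScaled_diagonal_indicator {n : ℕ} {d : Fin n → ℝ} {γ : ℝ} (hγ : 0 < γ)
    (hd : ∀ i, d i ≠ 0) (S : Finset (Fin n)) :
    fLinxScaled (diagonal d) S.card γ (fun i => if i ∈ S then 1 else 0)
      = 1 / 2 * ∑ i ∈ S, Real.log (d i ^ 2) := by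
  rw [fLinxScaled_diagonal d _ γ _ fun i =>
      (linx_diagonal_factor_pos hγ hd (indicator_mem_PP S).2 i).ne']
  have hlog : ∀ i, Real.log (γ * d i ^ 2 * (if i ∈ S then 1 else 0) + (1 - if i ∈ S then 1 else 0))
      = if i ∈ S then Real.log γ + Real.log (d i ^ 2) else 0 := by
    intro i
    split_ifs
    · rw [mul_one, sub_self, add_zero, Real.log_mul hγ.ne' (pow_ne_zero 2 (hd i))]
    · simp
  simp_rw [hlog, Finset.sum_ite_mem, Finset.univ_inter, Finset.sum_add_distrib, Finset.sum_const,
    nsmul_eq_mul]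
  ring

lemma one_le_one_div_sq_mul_sq {a b : ℝ} (ha : 0 < a) (hab : a ≤ b) : 1 ≤ 1 / a ^ 2 * b ^ 2 := by
  rw [one_div_mul_eq_div, one_le_div (by positivity)]
  gcongr

lemma one_div_sq_mul_sq_le_one {a b : ℝ} (hb : 0 ≤ b) (hba : b ≤ a) : 1 / a ^ 2 * b ^ 2 ≤ 1 := by
  rw [one_div_mul_eq_div]
  exact div_le_one_of_le₀ (by gcongr) (by positivity)

lemma bddAbove_fLinxScaled_diagonal_image {n : ℕ} {d : Fin n → ℝ} {γ : ℝ} (hγ : 0 < γ)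
    (hd : ∀ i, d i ≠ 0) (s : ℕ) : BddAbove (fLinxScaled (diagonal d) s γ '' PP n s) := by
  let S := Finset.univ.filter fun i => 1 ≤ γ * d i ^ 2
  refine ⟨fLinxScaled (diagonal d) s γ fun i => if i ∈ S then 1 else 0, ?_⟩
  rintro _ ⟨x, hx, rfl⟩
  refine fLinxScaled_diagonal_le_indicator hγ hd s S (fun i hi => (Finset.mem_filter.1 hi).2)
    (fun i hi => ?_) hx.2
  simp only [S, Finset.mem_filter, Finset.mem_univ, true_and, not_le] at hi
  exact hi.le

open scoped Classical in
theorem stmt_11_general (n s : ℕ) (hsn : s < n)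
    (d : Fin n → ℝ) (hmono : Antitone d) (hpos : ∀ i, 0 < d i)
    -- `iS` is the (1-based) index `s`
    (iS : Fin n) (hiS : (iS : ℕ) = s - 1)
    (γ0 : ℝ) (hγ0 : γ0 = 1 / d iS ^ 2)
    (xh : Fin n → ℝ) (hxh : xh = fun i : Fin n => if (i : ℕ) < s then (1 : ℝ) else 0) :
    xh ∈ PP n s ∧
    (∀ x ∈ PP n s,
      fLinxScaled (Matrix.diagonal d) s γ0 x ≤ fLinxScaled (Matrix.diagonal d) s γ0 xh) ∧
    (∀ γ : ℝ, 0 < γ →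
      linxScaled n s (Matrix.diagonal d) γ0 ≤ linxScaled n s (Matrix.diagonal d) γ) := by
  have hd : ∀ i, d i ≠ 0 := fun i => (hpos i).ne'
  have hdS := hpos iS
  have hγ0pos : 0 < γ0 := by rw [hγ0]; positivity
  set S : Finset (Fin n) := Finset.Iio ⟨s, hsn⟩
  have hS : S.card = s := Fin.card_Iio _
  have hxhS : xh = fun i => if i ∈ S then 1 else 0 := by
    simp only [hxh, S, Finset.mem_Iio, Fin.lt_def]
  have hin : ∀ i ∈ S, 1 ≤ γ0 * d i ^ 2 := fun i hi => hγ0 ▸ one_le_one_div_sq_mul_sq hdS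
    (hmono (by simp only [S, Finset.mem_Iio, Fin.lt_def] at hi; omega))
  have hout : ∀ i ∉ S, γ0 * d i ^ 2 ≤ 1 := fun i hi => hγ0 ▸ one_div_sq_mul_sq_le_one (hpos i).le
    (hmono (by simp only [S, Finset.mem_Iio, Fin.lt_def] at hi; omega))
  have hmem : xh ∈ PP n s := hS ▸ hxhS ▸ indicator_mem_PP S
  have hmax : ∀ x ∈ PP n s, fLinxScaled (diagonal d) s γ0 x ≤ fLinxScaled (diagonal d) s γ0 xh :=
    fun x hx => hxhS ▸ fLinxScaled_diagonal_le_indicator hγ0pos hd s S hin hout hx.2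
  refine ⟨hmem, hmax, fun γ hγ => ?_⟩
  calc linxScaled n s (diagonal d) γ0 = fLinxScaled (diagonal d) s γ0 xh :=
        IsGreatest.csSup_eq ⟨mem_image_of_mem _ hmem, forall_mem_image.2 hmax⟩
    _ = fLinxScaled (diagonal d) s γ xh := by
        rw [hxhS, ← hS, fLinxScaled_diagonal_indicator hγ0pos hd,
          fLinxScaled_diagonal_indicator hγ hd]
    _ ≤ linxScaled n s (diagonal d) γ :=
        le_csSup (bddAbove_fLinxScaled_diagonal_image hγ hd s) (mem_image_of_mem _ hmem)

open scoped Classical in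
theorem stmt_11 (n s : ℕ) (hs : 0 < s) (hsn : s < n)
    (d : Fin n → ℝ) (hmono : Antitone d) (hpos : ∀ i, 0 < d i)
    -- `iS` is the (1-based) index `s`
    (iS : Fin n) (hiS : (iS : ℕ) = s - 1)
    (γ0 : ℝ) (hγ0 : γ0 = 1 / d iS ^ 2)
    (xh : Fin n → ℝ) (hxh : xh = fun i : Fin n => if (i : ℕ) < s then (1 : ℝ) else 0) :
    xh ∈ PP n s ∧
    (∀ x ∈ PP n s,
      fLinxScaled (Matrix.diagonal d) s γ0 x ≤ fLinxScaled (Matrix.diagonal d) s γ0 xh) ∧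
    (∀ γ : ℝ, 0 < γ →
      linxScaled n s (Matrix.diagonal d) γ0 ≤ linxScaled n s (Matrix.diagonal d) γ) :=
  stmt_11_general n s hsn d hmono hpos iS hiS γ0 hγ0 xh hxh

end
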